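/- arXiv:1502.04338 — 3 statements merged into one kernel-verified Lean document; each statement's English description precedes it below -/
import Mathlib

section
/- If α : A → B and β : B → C are surjective group homomorphisms with perfect kernels, then β ∘ α : A → C is surjective with perfect kernel. -/
theorem Subgroup.commutator_comap_self_eq_of_perfect_ker {A B : Type*} [Group A] [Group B]
    {f : A →* B} (hf : Function.Surjective f) (hker : ⁅f.ker, f.ker⁆ = f.ker)
    {H : Subgroup B} (hH : ⁅H, H⁆ = H) :
    ⁅H.comap f, H.comap f⁆ = H.comap f := by
  have hmap : map f ⁅H.comap f, H.comap f⁆ = H := by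
    rw [map_commutator, map_comap_eq_self_of_surjective hf, hH]
  have hker_le : f.ker ≤ ⁅H.comap f, H.comap f⁆ :=
    hker ▸ commutator_mono (MonoidHom.ker_le_comap f H) (MonoidHom.ker_le_comap f H)
  rw [← comap_map_eq_self hker_le, hmap]

theorem stmt_4 (A B C : Type*) [Group A] [Group B] [Group C]
    (α : A →* B) (β : B →* C)
    (hα : Function.Surjective α) (hβ : Function.Surjective β)
    (hkα : ⁅α.ker, α.ker⁆ = α.ker) (hkβ : ⁅β.ker, β.ker⁆ = β.ker) :
    Function.Surjective (β.comp α) ∧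
      ⁅(β.comp α).ker, (β.comp α).ker⁆ = (β.comp α).ker := by
  rw [← MonoidHom.comap_ker]
  exact ⟨hβ.comp hα, Subgroup.commutator_comap_self_eq_of_perfect_ker hα hkα hkβ⟩
end

section
/- Let A, B, C, D be non-trivial groups and φ : A × B → C * D a surjective group homomorphism. Then one of φ(A × {1}) and φ({1} × B) is trivial and the other is all of C * D. -/
/-!
Let `H = φ(A × 1)` and `K = φ(1 × B)`. They commute elementwise and `HK = C ∗ D`, so both are
normal and `H ⊓ K` is central. The centre of `C ∗ D` is trivial: a reduced word `w'e` beginning in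
one factor and ending in the other is not central, as conjugating by its last letter `e` gives
the different reduced word `ew'`. If `H` and `K` were both non-trivial, normality would provide
`u ∈ H` and `v ∈ K` whose reduced words begin in `C` and end in `D`. Then `uv` and `vu` are reduced
as written, so the words of `u` and `v` commute in the free monoid and, by Lyndon–Schützenberger,
`u ^ |v| = v ^ |u|`, a non-trivial element of `H ⊓ K`. Hence one of `H`, `K` is trivial, and the
other is then all of `C ∗ D`.
-/

open Monoid

namespace FreeMonoid

variable {α : Type*}

theorem pow_length_eq_pow_length_of_commute {x y : FreeMonoid α} (h : Commute x y) :
    x ^ y.length = y ^ x.length := by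
  induction hn : x.length + y.length using Nat.strong_induction_on generalizing x y with
  | _ n ih =>
  rcases eq_or_ne x 1 with rfl | hx
  · simp
  rcases eq_or_ne y 1 with rfl | hy
  · simp
  have hlx : x.length ≠ 0 := mt length_eq_zero.1 hx
  have hly : y.length ≠ 0 := mt length_eq_zero.1 hy
  rcases List.append_eq_append_iff.1 (congrArg toList h.eq) with ⟨r, hyr, hry⟩ | ⟨r, hxr, hrx⟩
  · change y = x * ofList r at hyr
    change y = ofList r * x at hry
    have hxr : Commute x (ofList r) := hyr.symm.trans hry
    have := ih _ (by rw [← hn, hyr, length_mul]; omega) hxr rfl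
    rw [hyr, length_mul, pow_add, this, ← hxr.mul_pow]
  · change x = y * ofList r at hxr
    change x = ofList r * y at hrx
    have hyr : Commute y (ofList r) := hxr.symm.trans hrx
    have := ih _ (by rw [← hn, hxr, length_mul]; omega) hyr rfl
    rw [hxr, length_mul, pow_add, this, ← hyr.mul_pow]

end FreeMonoid

namespace MonoidHom

variable {A B G : Type*} [Group A] [Group B] [Group G]

theorem commute_of_mem_range_inl_of_mem_range_inr (φ : A × B →* G) {x y : G}
    (hx : x ∈ (φ.comp (inl A B)).range) (hy : y ∈ (φ.comp (inr A B)).range) : Commute x y := by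
  obtain ⟨a, rfl⟩ := hx
  obtain ⟨b, rfl⟩ := hy
  exact (commute_inl_inr a b).map φ

theorem range_comp_eq_bot_iff {N : Type*} [Group N] {g : G →* N} (hg : Function.Injective g)
    (f : A →* G) : (g.comp f).range = ⊥ ↔ f.range = ⊥ := by
  rw [range_comp, Subgroup.map_eq_bot_iff_of_injective _ hg]

variable {φ : A × B →* G}

theorem exists_eq_comp_inl_mul_comp_inr (hφ : Function.Surjective φ) (g : G) :
    ∃ a b, g = φ.comp (inl A B) a * φ.comp (inr A B) b := by
  obtain ⟨p, rfl⟩ := hφ g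
  exact ⟨p.1, p.2, by rw [comp_apply, comp_apply, ← map_mul, inl_apply, inr_apply, Prod.fst_mul_snd]⟩

theorem normal_range_comp_inl (hφ : Function.Surjective φ) : (φ.comp (inl A B)).range.Normal where
  conj_mem := by
    rintro _ ⟨a, rfl⟩ g
    obtain ⟨p, rfl⟩ := hφ g
    refine ⟨p.1 * a * p.1⁻¹, ?_⟩
    rw [comp_apply, comp_apply, ← map_inv, ← map_mul, ← map_mul]
    congr 1
    ext <;> simp

theorem normal_range_comp_inr (hφ : Function.Surjective φ) : (φ.comp (inr A B)).range.Normal where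
  conj_mem := by
    rintro _ ⟨b, rfl⟩ g
    obtain ⟨p, rfl⟩ := hφ g
    refine ⟨p.2 * b * p.2⁻¹, ?_⟩
    rw [comp_apply, comp_apply, ← map_inv, ← map_mul, ← map_mul]
    congr 1
    ext <;> simp

theorem range_comp_inl_inf_range_comp_inr_le_center (hφ : Function.Surjective φ) :
    (φ.comp (inl A B)).range ⊓ (φ.comp (inr A B)).range ≤ Subgroup.center G := by
  rintro t ⟨htA, htB⟩
  refine Subgroup.mem_center_iff.2 fun g => ?_
  obtain ⟨a, b, rfl⟩ := exists_eq_comp_inl_mul_comp_inr hφ g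
  exact ((φ.commute_of_mem_range_inl_of_mem_range_inr ⟨a, rfl⟩ htB).mul_left
    (φ.commute_of_mem_range_inl_of_mem_range_inr htA ⟨b, rfl⟩).symm).eq

theorem range_comp_inr_eq_top (hφ : Function.Surjective φ) (h : (φ.comp (inl A B)).range = ⊥) :
    (φ.comp (inr A B)).range = ⊤ := by
  refine range_eq_top.2 fun g => ?_
  obtain ⟨a, b, rfl⟩ := exists_eq_comp_inl_mul_comp_inr hφ g
  exact ⟨b, by rw [(Subgroup.eq_bot_iff_forall _).1 h _ ⟨a, rfl⟩, one_mul]⟩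

theorem range_comp_inl_eq_top (hφ : Function.Surjective φ) (h : (φ.comp (inr A B)).range = ⊥) :
    (φ.comp (inl A B)).range = ⊤ := by
  refine range_eq_top.2 fun g => ?_
  obtain ⟨a, b, rfl⟩ := exists_eq_comp_inl_mul_comp_inr hφ g
  exact ⟨a, by rw [(Subgroup.eq_bot_iff_forall _).1 h _ ⟨b, rfl⟩, mul_one]⟩

end MonoidHom

namespace Monoid.CoprodI

variable {ι : Type*} {G : ι → Type*} [∀ i, Group (G i)]

theorem Word.prod_injective : Function.Injective (Word.prod : Word G → CoprodI G) := by
  classical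
  exact Word.equiv.symm.injective

namespace NeWord

theorem prod_eq_lift_ofList {i j : ι} (w : NeWord G i j) :
    w.prod = FreeMonoid.lift (fun p : Σ i, G i => of p.2) (FreeMonoid.ofList w.toList) := by
  rw [FreeMonoid.lift_ofList]; rfl

theorem toList_eq_of_prod_eq {i j k l : ι} {w : NeWord G i j} {w' : NeWord G k l}
    (h : w.prod = w'.prod) : w.toList = w'.toList :=
  congrArg Word.toList (Word.prod_injective h)

theorem prod_ne_one {i j : ι} (w : NeWord G i j) : w.prod ≠ 1 := fun h =>
  w.toList_ne_nil (congrArg Word.toList (Word.prod_injective (h.trans Word.prod_empty.symm)))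

theorem exists_prod_eq_pow {i j : ι} (w : NeWord G i j) (hji : j ≠ i) (n : ℕ) :
    ∃ w' : NeWord G i j, w'.prod = w.prod ^ (n + 1) := by
  induction n with
  | zero => exact ⟨w, (pow_one _).symm⟩
  | succ n ih =>
    obtain ⟨w', hw'⟩ := ih
    exact ⟨append w hji w', by rw [append_prod, hw', ← pow_succ']⟩

theorem exists_append_prod_eq_mul_of {i j k l : ι} (w₁ : NeWord G i j) (hjk : j ≠ k)
    (w₂ : NeWord G k l) : ∃ m, ∃ hml : m ≠ l, ∃ (w : NeWord G i m) (e : G l) (he : e ≠ 1),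
      (append w₁ hjk w₂).prod = (append w hml (singleton e he)).prod := by
  induction w₂ generalizing j with
  | singleton e he => exact ⟨j, hjk, w₁, e, he, rfl⟩
  | append w₂ hne w₃ _ ih₃ =>
    obtain ⟨m, hml, w, e, he, h⟩ := ih₃ (append w₁ hjk w₂) hne
    exact ⟨m, hml, w, e, he, by rw [← h]; simp only [append_prod, mul_assoc]⟩

theorem prod_notMem_center {i j : ι} (w : NeWord G i j) (hij : i ≠ j) :
    w.prod ∉ Subgroup.center (CoprodI G) := by
  cases w with
  | singleton => exact absurd rfl hij
  | append w₁ hne w₂ =>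
    obtain ⟨m, hmj, w, e, he, hw⟩ := exists_append_prod_eq_mul_of w₁ hne w₂
    intro hc
    have hce := Subgroup.mem_center_iff.1 hc (of e)
    rw [hw, append_prod, prod_singleton, ← mul_assoc] at hce
    have hrot :
        (append (singleton e he) hij.symm w).prod = (append w hmj (singleton e he)).prod := by
      simpa only [append_prod, prod_singleton] using mul_right_cancel hce
    have hhead := congrArg List.head? (toList_eq_of_prod_eq hrot)
    simp only [toList_head?, Option.some.injEq, Sigma.mk.injEq] at hhead
    exact hij hhead.1.symm

end NeWord

section Bool

variable {M : Bool → Type*} [∀ b, Group (M b)] [Nontrivial (M true)] [Nontrivial (M false)]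

open NeWord in
theorem exists_neWord_prod_mem {S : Subgroup (CoprodI M)} [hN : S.Normal] (hS : S ≠ ⊥) :
    ∃ w : NeWord M true false, w.prod ∈ S := by
  classical
  obtain ⟨x, hxS, hx⟩ := S.bot_or_exists_ne_one.resolve_left hS
  obtain ⟨i, j, w, hw⟩ := of_word (Word.equiv x) fun h => hx <| by
    rw [← Word.equiv.symm_apply_apply x, h]; rfl
  have hwx : w.prod = x := by rw [NeWord.prod, hw]; exact Word.equiv.symm_apply_apply x
  obtain ⟨γ, hγ⟩ := exists_ne (1 : M true)
  obtain ⟨δ, hδ⟩ := exists_ne (1 : M false)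
  rw [← hwx] at hxS
  -- Take `x`, `x⁻¹`, or, if the word of `x` begins and ends in the same factor, `x` times a
  -- conjugate of `x` by a letter of that factor.
  cases i <;> cases j
  · exact ⟨append (append (append (singleton γ hγ) Bool.false_ne_true.symm w) Bool.false_ne_true
      (singleton γ⁻¹ (inv_ne_one.2 hγ))) Bool.false_ne_true.symm w, by
      simpa [mul_assoc] using S.mul_mem (hN.conj_mem _ hxS (of γ)) hxS⟩
  · exact ⟨w.inv, by simpa [inv_prod] using S.inv_mem hxS⟩
  · exact ⟨w, hxS⟩
  · exact ⟨append (append (append w Bool.false_ne_true.symm (singleton δ hδ)) Bool.false_ne_true w)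
      Bool.false_ne_true.symm (singleton δ⁻¹ (inv_ne_one.2 hδ)), by
      simpa [mul_assoc] using S.mul_mem hxS (hN.conj_mem _ hxS (of δ))⟩

theorem center_eq_bot : Subgroup.center (CoprodI M) = ⊥ := by
  by_contra h
  obtain ⟨w, hw⟩ := exists_neWord_prod_mem h
  exact w.prod_notMem_center Bool.false_ne_true.symm hw

theorem inf_ne_bot_of_commute {H K : Subgroup (CoprodI M)} [H.Normal] [K.Normal]
    (hHK : ∀ x ∈ H, ∀ y ∈ K, Commute x y) (hH : H ≠ ⊥) (hK : K ≠ ⊥) : H ⊓ K ≠ ⊥ := by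
  obtain ⟨u, hu⟩ := exists_neWord_prod_mem hH
  obtain ⟨v, hv⟩ := exists_neWord_prod_mem hK
  have hlist : Commute (FreeMonoid.ofList u.toList) (FreeMonoid.ofList v.toList) :=
    NeWord.toList_eq_of_prod_eq (w := .append u Bool.false_ne_true v)
      (w' := .append v Bool.false_ne_true u) (by simpa using (hHK _ hu _ hv).eq)
  have hpow := congrArg (FreeMonoid.lift fun p : Σ b, M b => of p.2)
    (FreeMonoid.pow_length_eq_pow_length_of_commute hlist)
  simp only [map_pow, ← NeWord.prod_eq_lift_ofList] at hpow
  obtain ⟨n, hn⟩ := Nat.exists_eq_succ_of_ne_zero (v.toList_ne_nil ∘ List.length_eq_zero_iff.1)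
  obtain ⟨t, ht⟩ := u.exists_prod_eq_pow Bool.false_ne_true n
  have htu : t.prod = u.prod ^ v.toList.length := by rw [ht, hn]
  refine fun hbot => t.prod_ne_one ((Subgroup.eq_bot_iff_forall _).1 hbot _ ⟨?_, ?_⟩)
  · exact htu ▸ H.pow_mem hu _
  · exact (htu.trans hpow) ▸ K.pow_mem hv _

theorem range_comp_inl_eq_bot_or_range_comp_inr_eq_bot {A B : Type*} [Group A] [Group B]
    (φ : A × B →* CoprodI M) (hφ : Function.Surjective φ) :
    (φ.comp (MonoidHom.inl A B)).range = ⊥ ∨ (φ.comp (MonoidHom.inr A B)).range = ⊥ := by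
  have := φ.normal_range_comp_inl hφ
  have := φ.normal_range_comp_inr hφ
  by_contra! ⟨hA, hB⟩
  refine inf_ne_bot_of_commute (fun x hx y hy => φ.commute_of_mem_range_inl_of_mem_range_inr hx hy)
    hA hB (eq_bot_iff.2 ?_)
  exact center_eq_bot (M := M) ▸ φ.range_comp_inl_inf_range_comp_inr_le_center hφ

end Bool

end Monoid.CoprodI

namespace Monoid.Coprod

universe u v

variable (C : Type u) (D : Type v) [Group C] [Group D]

def pairFamily : Bool → Type (max u v)
  | true => ULift.{v} C
  | false => ULift.{u} D

instance : ∀ b, Group (pairFamily C D b)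
  | true => inferInstanceAs (Group (ULift C))
  | false => inferInstanceAs (Group (ULift D))

instance [Nontrivial C] : Nontrivial (pairFamily C D true) := inferInstanceAs (Nontrivial (ULift C))

instance [Nontrivial D] : Nontrivial (pairFamily C D false) := inferInstanceAs (Nontrivial (ULift D))

def mulEquivCoprodI : C ∗ D ≃* CoprodI (pairFamily C D) :=
  MonoidHom.toMulEquiv
    (lift ((CoprodI.of (i := true)).comp MulEquiv.ulift.symm.toMonoidHom)
      ((CoprodI.of (i := false)).comp MulEquiv.ulift.symm.toMonoidHom))
    (CoprodI.lift fun
      | true => inl.comp MulEquiv.ulift.toMonoidHom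
      | false => inr.comp MulEquiv.ulift.toMonoidHom)
    (by apply hom_ext <;> ext <;> rfl)
    (by ext (_ | _) <;> rfl)

end Monoid.Coprod

theorem stmt_10_general (A B C D : Type*) [Group A] [Group B] [Group C] [Group D]
    [Nontrivial C] [Nontrivial D]
    (φ : A × B →* Coprod C D) (hφ : Function.Surjective φ) :
    ((φ.comp (MonoidHom.inl A B)).range = ⊥ ∧ (φ.comp (MonoidHom.inr A B)).range = ⊤) ∨
    ((φ.comp (MonoidHom.inl A B)).range = ⊤ ∧ (φ.comp (MonoidHom.inr A B)).range = ⊥) := by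
  let e := (Coprod.mulEquivCoprodI C D).toMonoidHom
  have he : Function.Injective e := (Coprod.mulEquivCoprodI C D).injective
  have key := CoprodI.range_comp_inl_eq_bot_or_range_comp_inr_eq_bot (e.comp φ)
    ((Coprod.mulEquivCoprodI C D).surjective.comp hφ)
  simp only [MonoidHom.comp_assoc, MonoidHom.range_comp_eq_bot_iff he] at key
  rcases key with hA | hB
  · exact .inl ⟨hA, φ.range_comp_inr_eq_top hφ hA⟩
  · exact .inr ⟨φ.range_comp_inl_eq_top hφ hB, hB⟩

theorem stmt_10 (A B C D : Type*) [Group A] [Group B] [Group C] [Group D]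
    [Nontrivial A] [Nontrivial B] [Nontrivial C] [Nontrivial D]
    (φ : A × B →* Coprod C D) (hφ : Function.Surjective φ) :
    ((φ.comp (MonoidHom.inl A B)).range = ⊥ ∧ (φ.comp (MonoidHom.inr A B)).range = ⊤) ∨
    ((φ.comp (MonoidHom.inl A B)).range = ⊤ ∧ (φ.comp (MonoidHom.inr A B)).range = ⊥) :=
  stmt_10_general A B C D φ hφ
end

section
/- A non-trivial free product of groups is not isomorphic to a non-trivial direct product: if C, D are non-trivial groups and A, B are non-trivial groups, then C * D is not isomorphic to A × B. -/
/-!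
Pick `c ≠ 1` in `C`, `d ≠ 1` in `D` and let `z = c d`. In the free product `z` has infinite
order and its centralizer is `⟨z⟩`: if `u` commutes with `z` and its reduced word neither starts
with a letter of `D` nor ends with a letter of `C`, the reduced words of `u z` and `z u` are
`u ++ [c, d]` and `[c, d] ++ u`, so `u = z v` with `v` shorter; the other shapes of `u` either
reduce to this one through `u⁻¹` or make one of `u z`, `z u` shorter than the other.

In `A × B` with both factors nontrivial, no `z = (p, q)` of infinite order has its centralizer
inside `⟨z⟩`: take `a ≠ 1` commuting with `p` and `b ≠ 1` commuting with `q`; if `(a, 1) = z ^ s`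
and `(1, b) = z ^ r`, then `z ^ (s * r) = 1`, so `s = 0` or `r = 0`.
-/

open Monoid

theorem List.exists_eq_pair_append_of_append_comm {α : Type*} {a b : α} (hab : a ≠ b)
    {L : List α} (hL : L ≠ []) (h : L ++ [a, b] = [a, b] ++ L) : ∃ L', L = [a, b] ++ L' := by
  match L, h with
  | [], _ => exact absurd rfl hL
  | [x], h =>
    simp only [List.cons_append, List.nil_append, List.cons.injEq, and_true] at h
    exact absurd (h.1.symm.trans h.2.2.symm) hab
  | x :: y :: L', h =>
    simp only [List.cons_append, List.nil_append, List.cons.injEq] at h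
    exact ⟨L', by simp [h.1, h.2.1]⟩

theorem exists_ne_one_commute {A : Type*} [Group A] [Nontrivial A] (p : A) :
    ∃ a ≠ 1, Commute a p := by
  by_cases hp : p = 1
  · obtain ⟨a, ha⟩ := exists_ne (1 : A)
    exact ⟨a, ha, hp ▸ Commute.one_right a⟩
  · exact ⟨p, hp, Commute.refl p⟩

theorem Prod.not_centralizer_le_zpowers {A B : Type*} [Group A] [Group B] [Nontrivial A]
    [Nontrivial B] {z : A × B} (hz : ¬IsOfFinOrder z) :
    ¬Subgroup.centralizer {z} ≤ Subgroup.zpowers z := by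
  intro hle
  obtain ⟨a, ha, hap⟩ := exists_ne_one_commute z.1
  obtain ⟨b, hb, hbq⟩ := exists_ne_one_commute z.2
  have hac : ((a, 1) : A × B) ∈ Subgroup.centralizer {z} :=
    Subgroup.mem_centralizer_singleton_iff.2 (Prod.ext hap (Commute.one_left z.2))
  have hbc : ((1, b) : A × B) ∈ Subgroup.centralizer {z} :=
    Subgroup.mem_centralizer_singleton_iff.2 (Prod.ext (Commute.one_left z.1) hbq)
  obtain ⟨s, hs⟩ := Subgroup.mem_zpowers_iff.1 (hle hac)
  obtain ⟨r, hr⟩ := Subgroup.mem_zpowers_iff.1 (hle hbc)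
  have hsr : z ^ (s * r) = 1 := by
    refine Prod.ext ?_ ?_
    · rw [mul_comm, zpow_mul, hr]; simp
    · rw [zpow_mul, hs]; simp
  obtain rfl | rfl : s = 0 ∨ r = 0 := by
    by_contra! h
    exact hz (isOfFinOrder_iff_zpow_eq_one.2 ⟨s * r, mul_ne_zero h.1 h.2, hsr⟩)
  · exact ha (by simpa using (congrArg Prod.fst hs).symm)
  · exact hb (by simpa using (congrArg Prod.snd hr).symm)

theorem isEmpty_mulEquiv_prod_of_centralizer_le_zpowers {G A B : Type*} [Group G] [Group A]
    [Group B] [Nontrivial A] [Nontrivial B] {z : G} (hz : ¬IsOfFinOrder z)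
    (hcent : Subgroup.centralizer {z} ≤ Subgroup.zpowers z) : IsEmpty (G ≃* A × B) := by
  refine ⟨fun e => Prod.not_centralizer_le_zpowers (z := e z) ?_ ?_⟩
  · exact fun h => hz ((Function.Injective.isOfFinOrder_iff (f := e.toMonoidHom) e.injective).1 h)
  · intro u hu
    have hu' : e.symm u ∈ Subgroup.centralizer {z} := by
      rw [Subgroup.mem_centralizer_singleton_iff] at hu ⊢
      simpa using congrArg e.symm hu
    obtain ⟨k, hk⟩ := Subgroup.mem_zpowers_iff.1 (hcent hu')
    exact Subgroup.mem_zpowers_iff.2 ⟨k, by rw [← map_zpow, hk, e.apply_symm_apply]⟩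

namespace Monoid.CoprodI

section NormalForm

variable {ι : Type*} {M : ι → Type*} [∀ i, Monoid (M i)]

def IsReducedWord (L : List (Σ i, M i)) : Prop :=
  (∀ l ∈ L, l.2 ≠ 1) ∧ L.IsChain fun l l' => l.1 ≠ l'.1

def listProd (L : List (Σ i, M i)) : CoprodI M :=
  (L.map fun l => of l.2).prod

@[simp]
theorem listProd_nil : listProd ([] : List (Σ i, M i)) = 1 := rfl

@[simp]
theorem listProd_cons (l : Σ i, M i) (L : List (Σ i, M i)) :
    listProd (l :: L) = of l.2 * listProd L := by
  simp [listProd]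

@[simp]
theorem listProd_append (L₁ L₂ : List (Σ i, M i)) :
    listProd (L₁ ++ L₂) = listProd L₁ * listProd L₂ := by
  simp [listProd]

theorem isReducedWord_append_iff {L₁ L₂ : List (Σ i, M i)} :
    IsReducedWord (L₁ ++ L₂) ↔ IsReducedWord L₁ ∧ IsReducedWord L₂ ∧
      ∀ a ∈ L₁.getLast?, ∀ b ∈ L₂.head?, a.1 ≠ b.1 := by
  simp only [IsReducedWord, List.mem_append, List.isChain_append]
  grind

variable [DecidableEq ι] [∀ i, DecidableEq (M i)]

def normalForm (g : CoprodI M) : List (Σ i, M i) := (Word.equiv g).toList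

def headIdx (g : CoprodI M) : Option ι := (normalForm g).head?.map Sigma.fst

def lastIdx (g : CoprodI M) : Option ι := (normalForm g).getLast?.map Sigma.fst

theorem isReducedWord_normalForm (g : CoprodI M) : IsReducedWord (normalForm g) :=
  ⟨(Word.equiv g).ne_one, (Word.equiv g).chain_ne⟩

@[simp]
theorem listProd_normalForm (g : CoprodI M) : listProd (normalForm g) = g :=
  Word.equiv.symm_apply_apply g

theorem normalForm_listProd {L : List (Σ i, M i)} (hL : IsReducedWord L) :
    normalForm (listProd L) = L :=
  congrArg Word.toList (Word.equiv.apply_symm_apply ⟨L, hL.1, hL.2⟩)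

@[simp]
theorem normalForm_one : normalForm (1 : CoprodI M) = [] :=
  normalForm_listProd (L := []) ⟨by simp, List.isChain_nil⟩

theorem normalForm_eq_nil_iff {g : CoprodI M} : normalForm g = [] ↔ g = 1 :=
  ⟨fun h => by rw [← listProd_normalForm g, h, listProd_nil], fun h => h ▸ normalForm_one⟩

theorem normalForm_mul {g h : CoprodI M} (hgh : lastIdx g ≠ headIdx h) :
    normalForm (g * h) = normalForm g ++ normalForm h := by
  conv_lhs => rw [← listProd_normalForm g, ← listProd_normalForm h, ← listProd_append]
  refine normalForm_listProd (isReducedWord_append_iff.2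
    ⟨isReducedWord_normalForm g, isReducedWord_normalForm h, fun a ha b hb hab => hgh ?_⟩)
  simp [lastIdx, headIdx, Option.mem_def.1 ha, Option.mem_def.1 hb, hab]

theorem normalForm_of_mul_of {i j : ι} (hij : i ≠ j) {c : M i} {d : M j} (hc : c ≠ 1)
    (hd : d ≠ 1) : normalForm (of c * of d) = [⟨i, c⟩, ⟨j, d⟩] := by
  have h : IsReducedWord [(⟨i, c⟩ : Σ i, M i), ⟨j, d⟩] := by
    refine ⟨by simp [hc, hd], ?_⟩
    simpa using hij
  simpa using normalForm_listProd h

theorem length_normalForm_listProd_mul_of_le {L : List (Σ i, M i)} (hL : IsReducedWord L)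
    {i : ι} (hlast : ∀ a ∈ L.getLast?, a.1 ≠ i) (x : M i) :
    (normalForm (listProd L * of x)).length ≤ L.length + 1 := by
  by_cases hx : x = 1
  · simp [hx, normalForm_listProd hL]
  have hred : IsReducedWord (L ++ [⟨i, x⟩]) := by
    refine isReducedWord_append_iff.2 ⟨hL, ⟨by simpa using hx, List.isChain_singleton _⟩, ?_⟩
    rintro a ha _ ⟨⟩
    exact hlast a ha
  have := normalForm_listProd hred
  simp only [listProd_append, listProd_cons, listProd_nil, mul_one] at this
  simp [this]

theorem length_normalForm_mul_of_le_of_lastIdx_eq {g : CoprodI M} {i : ι}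
    (hg : lastIdx g = some i) (x : M i) :
    (normalForm (g * of x)).length ≤ (normalForm g).length := by
  obtain ⟨L, ⟨k, y⟩, hL⟩ : ∃ L b, normalForm g = L ++ [b] := by
    rcases List.eq_nil_or_concat' (normalForm g) with h | h
    · simp [lastIdx, h] at hg
    · exact h
  obtain rfl : k = i := by simpa [lastIdx, hL] using hg
  have hred := isReducedWord_append_iff.1 (hL ▸ isReducedWord_normalForm g)
  have hprod : g * of x = listProd L * of (y * x) := by
    rw [← listProd_normalForm g, hL]
    simp [mul_assoc]
  rw [hprod, hL, List.length_append, List.length_singleton]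
  exact length_normalForm_listProd_mul_of_le hred.1
    (fun a ha => hred.2.2 a ha ⟨k, y⟩ rfl) _

theorem length_normalForm_mul_of_le (g : CoprodI M) {i : ι} (x : M i) :
    (normalForm (g * of x)).length ≤ (normalForm g).length + 1 := by
  by_cases hg : lastIdx g = some i
  · exact (length_normalForm_mul_of_le_of_lastIdx_eq hg x).trans (Nat.le_succ _)
  · have := length_normalForm_listProd_mul_of_le (isReducedWord_normalForm g)
      (fun a ha hai => hg (by simp [lastIdx, Option.mem_def.1 ha, hai])) x
    rwa [listProd_normalForm] at this

section Alternating

variable {i j : ι} {c : M i} {d : M j}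

theorem normalForm_of_mul_of_mul {u : CoprodI M} (hij : i ≠ j) (hc : c ≠ 1) (hd : d ≠ 1)
    (hu : headIdx u ≠ some j) :
    normalForm (of c * of d * u) = [⟨i, c⟩, ⟨j, d⟩] ++ normalForm u := by
  rw [normalForm_mul (by simpa [lastIdx, normalForm_of_mul_of hij hc hd] using hu.symm),
    normalForm_of_mul_of hij hc hd]

theorem normalForm_mul_of_mul_of {u : CoprodI M} (hij : i ≠ j) (hc : c ≠ 1) (hd : d ≠ 1)
    (hu : lastIdx u ≠ some i) :
    normalForm (u * (of c * of d)) = normalForm u ++ [⟨i, c⟩, ⟨j, d⟩] := by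
  rw [normalForm_mul (by simpa [headIdx, normalForm_of_mul_of hij hc hd] using hu),
    normalForm_of_mul_of hij hc hd]

theorem not_commute_of_mul_of {u : CoprodI M} (hij : i ≠ j) (hc : c ≠ 1) (hd : d ≠ 1)
    (hhead : headIdx u ≠ some j) (hlast : lastIdx u = some i) :
    ¬Commute u (of c * of d) := by
  intro hu
  have hleft := congrArg List.length (normalForm_of_mul_of_mul hij hc hd hhead)
  have hright : (normalForm (u * (of c * of d))).length ≤ (normalForm u).length + 1 := by
    rw [← mul_assoc]
    exact (length_normalForm_mul_of_le _ d).trans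
      (Nat.add_le_add_right (length_normalForm_mul_of_le_of_lastIdx_eq hlast c) 1)
  rw [hu.eq] at hright
  simp only [List.cons_append, List.nil_append, List.length_cons] at hleft
  omega

theorem exists_eq_of_mul_of_mul_of_commute {u : CoprodI M} (hij : i ≠ j) (hc : c ≠ 1)
    (hd : d ≠ 1) (hu1 : u ≠ 1) (hhead : headIdx u ≠ some j) (hlast : lastIdx u ≠ some i)
    (hu : Commute u (of c * of d)) :
    ∃ v, u = of c * of d * v ∧ (normalForm v).length < (normalForm u).length := by
  have hcomm := normalForm_mul_of_mul_of hij hc hd hlast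
  rw [hu.eq, normalForm_of_mul_of_mul hij hc hd hhead] at hcomm
  obtain ⟨L, hL⟩ := List.exists_eq_pair_append_of_append_comm (by simp [hij])
    (mt normalForm_eq_nil_iff.1 hu1) hcomm.symm
  have hred := (isReducedWord_append_iff.1 (hL ▸ isReducedWord_normalForm u)).2.1
  refine ⟨listProd L, ?_, ?_⟩
  · conv_lhs => rw [← listProd_normalForm u, hL]
    simp [mul_assoc]
  · simp [normalForm_listProd hred, hL]

end Alternating

end NormalForm

theorem not_isOfFinOrder_of_mul_of {ι : Type*} {M : ι → Type*} [∀ i, Monoid (M i)] {i j : ι}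
    (hij : i ≠ j) {c : M i} {d : M j} (hc : c ≠ 1) (hd : d ≠ 1) :
    ¬IsOfFinOrder (of c * of d) := by
  classical
  have key : ∀ n : ℕ, headIdx ((of c * of d) ^ n) ≠ some j ∧
      (normalForm ((of c * of d) ^ n)).length = 2 * n := by
    intro n
    induction n with
    | zero => simp [headIdx]
    | succ n ih =>
      rw [pow_succ', normalForm_of_mul_of_mul hij hc hd ih.1]
      simp [headIdx, normalForm_of_mul_of_mul hij hc hd ih.1, hij, ih.2]
      omega
  rw [isOfFinOrder_iff_pow_eq_one]
  rintro ⟨n, hn, hpow⟩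
  have h0 := (key n).2
  rw [hpow, normalForm_one, List.length_nil] at h0
  omega

section Group

variable {ι : Type*} {G : ι → Type*} [∀ i, Group (G i)]

def invList (L : List (Σ i, G i)) : List (Σ i, G i) :=
  (L.map fun l => ⟨l.1, l.2⁻¹⟩).reverse

theorem listProd_invList (L : List (Σ i, G i)) : listProd (invList L) = (listProd L)⁻¹ := by
  induction L with
  | nil => simp [invList]
  | cons l L ih =>
    simp only [invList, List.map_cons, List.reverse_cons, listProd_append] at ih ⊢
    simp [ih, mul_inv_rev]

theorem IsReducedWord.invList {L : List (Σ i, G i)} (hL : IsReducedWord L) :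
    IsReducedWord (invList L) := by
  refine ⟨?_, ?_⟩
  · simp only [CoprodI.invList, List.mem_reverse, List.mem_map]
    rintro _ ⟨l, hl, rfl⟩
    simpa using hL.1 l hl
  rw [CoprodI.invList, List.isChain_reverse, List.isChain_map]
  exact hL.2.imp fun _ _ h => h.symm

variable [DecidableEq ι] [∀ i, DecidableEq (G i)]

theorem normalForm_inv (g : CoprodI G) : normalForm g⁻¹ = invList (normalForm g) := by
  rw [← normalForm_listProd (isReducedWord_normalForm g).invList, listProd_invList,
    listProd_normalForm]

@[simp]
theorem length_normalForm_inv (g : CoprodI G) :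
    (normalForm g⁻¹).length = (normalForm g).length := by
  simp [normalForm_inv, invList]

@[simp]
theorem headIdx_inv (g : CoprodI G) : headIdx g⁻¹ = lastIdx g := by
  simp [headIdx, lastIdx, normalForm_inv, invList, List.head?_reverse, List.getLast?_map,
    Option.map_map, Function.comp_def]

@[simp]
theorem lastIdx_inv (g : CoprodI G) : lastIdx g⁻¹ = headIdx g := by
  simp [headIdx, lastIdx, normalForm_inv, invList, List.getLast?_reverse, List.head?_map,
    Option.map_map, Function.comp_def]

end Group

theorem centralizer_of_mul_of_le_zpowers {ι : Type*} {G : ι → Type*} [∀ i, Group (G i)]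
    {i j : ι} (hij : i ≠ j) {c : G i} {d : G j} (hc : c ≠ 1) (hd : d ≠ 1) :
    Subgroup.centralizer {of c * of d} ≤ Subgroup.zpowers (of c * of d) := by
  classical
  set z := of c * of d with hz
  intro u hu
  replace hu : Commute u z := Subgroup.mem_centralizer_singleton_iff.1 hu
  induction hn : (normalForm u).length using Nat.strong_induction_on generalizing u with
  | _ n ih =>
    have descend : ∀ v : CoprodI G, Commute v z → v ≠ 1 → headIdx v ≠ some j →
        lastIdx v ≠ some i → (normalForm v).length = n → v ∈ Subgroup.zpowers z := by
      intro v hv hv1 hhead hlast hvn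
      obtain ⟨w, rfl, hw⟩ := exists_eq_of_mul_of_mul_of_commute hij hc hd hv1 hhead hlast hv
      have hwz : Commute w z := by
        have := (Commute.refl z).inv_left.mul_left hv
        rwa [← hz, inv_mul_cancel_left] at this
      exact mul_mem (Subgroup.mem_zpowers z) (ih _ (hvn ▸ hw) hwz rfl)
    by_cases hu1 : u = 1
    · exact hu1 ▸ one_mem _
    by_cases hhead : headIdx u = some j <;> by_cases hlast : lastIdx u = some i
    · refine inv_mem_iff.1 (descend u⁻¹ hu.inv_left (inv_ne_one.2 hu1) ?_ ?_ (by simpa using hn))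
      · simpa [hlast] using hij
      · simpa [hhead] using hij.symm
    · have hz_inv : z⁻¹ = of d⁻¹ * of c⁻¹ := by simp [hz]
      refine absurd (hz_inv ▸ hu.inv_inv) (not_commute_of_mul_of hij.symm (inv_ne_one.2 hd)
        (inv_ne_one.2 hc) ?_ ?_)
      · simpa using hlast
      · simpa using hhead
    · exact absurd hu (not_commute_of_mul_of hij hc hd hhead hlast)
    · exact descend u hu hu1 hhead hlast hn

def boolEquivCoprod {M : Bool → Type*} [∀ b, Monoid (M b)] :
    CoprodI M ≃* Coprod (M true) (M false) :=
  MonoidHom.toMulEquiv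
    (lift fun b => b.rec (motive := fun b => M b →* Coprod (M true) (M false))
      Coprod.inr Coprod.inl)
    (Coprod.lift of of)
    (ext_hom _ _ fun b => by cases b <;> ext <;> simp)
    (Coprod.hom_ext (by ext; simp) (by ext; simp))

end Monoid.CoprodI

universe u

instance Bool.instGroupCond {X Y : Type u} [Group X] [Group Y] : ∀ b : Bool, Group (cond b X Y)
  | true => ‹Group X›
  | false => ‹Group Y›

theorem stmt_11 (A B C D : Type*) [Group A] [Group B] [Group C] [Group D]
    [Nontrivial A] [Nontrivial B] [Nontrivial C] [Nontrivial D] :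
    IsEmpty (Coprod C D ≃* A × B) := by
  obtain ⟨c, hc⟩ := exists_ne (1 : C)
  obtain ⟨d, hd⟩ := exists_ne (1 : D)
  -- `ULift` puts `C` and `D` in a common universe, so that they form a family over `Bool`.
  let M : Bool → Type _ := fun b => cond b (ULift.{u_4} C) (ULift.{u_3} D)
  have e : CoprodI M ≃* Coprod C D :=
    CoprodI.boolEquivCoprod.trans (MulEquiv.coprodCongr MulEquiv.ulift MulEquiv.ulift)
  have hc' : (ULift.up c : M true) ≠ 1 := fun h => hc (congrArg ULift.down h)
  have hd' : (ULift.up d : M false) ≠ 1 := fun h => hd (congrArg ULift.down h)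
  have htf : true ≠ false := by decide
  have := isEmpty_mulEquiv_prod_of_centralizer_le_zpowers (A := A) (B := B)
    (CoprodI.not_isOfFinOrder_of_mul_of htf hc' hd')
    (CoprodI.centralizer_of_mul_of_le_zpowers (G := M) htf hc' hd')
  exact ⟨fun f => this.false (e.trans f)⟩
end
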